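/- arXiv:2412.02373 — 4 statements merged into one kernel-verified Lean document; each statement's English description precedes it below -/
import Mathlib

section
/- Let L be a symmetric loss function with Σ_{k=1}^K L(p,k) = c for all p. Under symmetric label noise with rate η (each label flipped uniformly to one of the other K−1 classes with total probability η), the noisy risk satisfies R^η_L(f) = (1 − ηK/(K−1))·R_L(f) + ηc/(K−1) for every classifier f, where R_L(f) = E_{(x,y)}[L(f(x),y)] and R^η_L(f) = E_{(x,ŷ)}[L(f(x),ŷ)]. -/
open Finset

theorem symmetric_noise_risk_affine {K : ℕ} (hK : 2 ≤ K) {X C I : Type*} [Fintype I]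
    (L : C → Fin K → ℝ) (c : ℝ) (hsym : ∀ p : C, ∑ k : Fin K, L p k = c)
    (η : ℝ) (w : I → ℝ) (hw : ∀ i, 0 ≤ w i) (hw1 : ∑ i, w i = 1)
    (x : I → X) (y : I → Fin K) (f : X → C) :
    (∑ i, w i * ((1 - η) * L (f (x i)) (y i) +
        ∑ j ∈ Finset.univ.erase (y i), (η / ((K : ℝ) - 1)) * L (f (x i)) j))
      = (1 - η * K / ((K : ℝ) - 1)) * (∑ i, w i * L (f (x i)) (y i))
        + η * c / ((K : ℝ) - 1) := by
  have hK1 : ((K : ℝ) - 1) ≠ 0 := by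
    have : (2 : ℝ) ≤ (K : ℝ) := by exact_mod_cast hK
    linarith
  have key : ∀ i, w i * ((1 - η) * L (f (x i)) (y i) +
        ∑ j ∈ Finset.univ.erase (y i), (η / ((K : ℝ) - 1)) * L (f (x i)) j)
      = (1 - η * K / ((K : ℝ) - 1)) * (w i * L (f (x i)) (y i))
        + w i * (η * c / ((K : ℝ) - 1)) := by
    intro i
    have herase : ∑ j ∈ Finset.univ.erase (y i), L (f (x i)) j
        = c - L (f (x i)) (y i) := by
      have := Finset.add_sum_erase Finset.univ (L (f (x i))) (Finset.mem_univ (y i))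
      rw [hsym] at this
      linarith
    rw [← Finset.mul_sum, herase]
    field_simp
    ring
  rw [Finset.sum_congr rfl (fun i _ => key i), Finset.sum_add_distrib,
    ← Finset.mul_sum, ← Finset.sum_mul, hw1, one_mul]
end

section
/- With the same setup as for NNCE, the partial derivative of NNCE(p, y) with respect to p_y equals −(1/p_y) · (Σ_{k ≠ y} (A + log p_k)) / (Σ_{k=1}^K (A + log p_k))², which is strictly negative when K ≥ 2. -/
/-! Only the `y`-th summand of the denominator moves with `p y`, so with `u = A + log p_y` and
`S = Σ_{k ≠ y} (A + log p_k)` the loss is `1 - u / (u + S)`, whose derivative in `u` is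
`-S / (u + S)²`; the chain rule contributes `du/dp_y = 1 / p_y`. Every summand is positive, so
`S > 0` as soon as there is a second label. -/

open Finset

theorem Finset.sum_comp_update {ι M α : Type*} [Fintype ι] [DecidableEq ι] [AddCommMonoid M]
    (f : α → M) (p : ι → α) (y : ι) (t : α) :
    ∑ k, f (Function.update p y t k) = f t + ∑ k ∈ univ.erase y, f (p k) := by
  rw [← add_sum_erase _ _ (mem_univ y), Function.update_self]
  congr 1
  exact sum_congr rfl fun k hk => by rw [Function.update_of_ne (ne_of_mem_erase hk)]

theorem Finset.sum_erase_pos {ι M : Type*} [Fintype ι] [DecidableEq ι] [Nontrivial ι]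
    [AddCommMonoid M] [PartialOrder M] [IsOrderedCancelAddMonoid M] {f : ι → M} (hf : ∀ k, 0 < f k) (y : ι) : 0 < ∑ k ∈ univ.erase y, f k := by
  obtain ⟨z, hz⟩ := exists_ne y
  exact sum_pos (fun k _ => hf k) ⟨z, mem_erase.mpr ⟨hz, mem_univ z⟩⟩

theorem HasDerivAt.one_sub_div_add_const {u : ℝ → ℝ} {u' x : ℝ} (hu : HasDerivAt u u' x)
    (S : ℝ) (hx : u x + S ≠ 0) :
    HasDerivAt (fun t => 1 - u t / (u t + S)) (-(u' * S / (u x + S) ^ 2)) x := by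
  rw [show u' * S = u' * (u x + S) - u x * u' by ring]
  exact (hu.div (hu.add_const S) hx).const_sub 1

theorem nnce_deriv_label {K : ℕ} (hK : 2 ≤ K) (p : Fin K → ℝ)
    (hp : ∀ k, 0 < p k ∧ p k < 1)
    (A : ℝ) (hA : ∀ k, 0 < A + Real.log (p k)) (y : Fin K) :
    HasDerivAt (fun t : ℝ => 1 - (A + Real.log (Function.update p y t y)) /
        ∑ k : Fin K, (A + Real.log (Function.update p y t k)))
      (-((1 / p y) * (∑ k ∈ Finset.univ.erase y, (A + Real.log (p k))) /
          (∑ k : Fin K, (A + Real.log (p k))) ^ 2)) (p y)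
    ∧ (-((1 / p y) * (∑ k ∈ Finset.univ.erase y, (A + Real.log (p k))) /
          (∑ k : Fin K, (A + Real.log (p k))) ^ 2)) < 0 := by
  have : Nontrivial (Fin K) := Fin.nontrivial_iff_two_le.mpr hK
  have hpy : 0 < p y := (hp y).1
  set S := ∑ k ∈ univ.erase y, (A + Real.log (p k))
  have hS : 0 < S := sum_erase_pos hA y
  have htotal : ∑ k, (A + Real.log (p k)) = A + Real.log (p y) + S :=
    (add_sum_erase _ _ (mem_univ y)).symm
  have hlog : HasDerivAt (fun t => A + Real.log t) (1 / p y) (p y) := by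
    simpa only [one_div] using (Real.hasDerivAt_log hpy.ne').const_add A
  have htotal_pos : 0 < ∑ k, (A + Real.log (p k)) := sum_pos (fun k _ => hA k) univ_nonempty
  constructor
  · simp only [Function.update_self, sum_comp_update (fun s => A + Real.log s), htotal]
    exact hlog.one_sub_div_add_const S (htotal ▸ htotal_pos.ne')
  · exact neg_neg_of_pos (div_pos (mul_pos (one_div_pos.mpr hpy) hS) (pow_pos htotal_pos 2))
end

section
/- Let K ≥ 3, let p ∈ (0,1)^K be a probability vector with p_y = max_k p_k, let j ≠ y, and let D with 0 < D ≤ 1 − p_y. Let (d_k)_{k ≠ j, k ≠ y} be nonnegative reals with d_k ≤ p_k for all such k and Σ_{k ≠ j, y} d_k = D, and suppose p_y + D ≤ 1. Then Σ_{k=1}^K log p_k > log(p_y + D) + log p_j + Σ_{k ≠ j, y} log(p_k − d_k), provided all logarithm arguments are positive (in particular p_k − d_k > 0). -/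
/-!
Both sides contain `log p_j`. Since `log` is concave it lies below its tangent lines:
raising `p_y` by `D` gains less than `D / p_y`, while lowering each `p_k` by `d_k` loses at
least `d_k / p_k ≥ d_k / p_y`, and these losses add up to at least `D / p_y`.
-/

open Finset

namespace Real

lemma log_le_log_add_sub_div {a x : ℝ} (ha : 0 < a) (hx : 0 < x) :
    log x ≤ log a + (x - a) / a := by
  have h := log_le_sub_one_of_pos (div_pos hx ha)
  rw [log_div hx.ne' ha.ne'] at h
  rw [sub_div, div_self ha.ne']
  linarith

lemma log_lt_log_add_sub_div {a x : ℝ} (ha : 0 < a) (hx : 0 < x) (hxa : x ≠ a) :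
    log x < log a + (x - a) / a := by
  have hne : x / a ≠ 1 := fun h => hxa ((div_eq_one_iff_eq ha.ne').1 h)
  have h := log_lt_sub_one_of_pos (div_pos hx ha) hne
  rw [log_div hx.ne' ha.ne'] at h
  rw [sub_div, div_self ha.ne']
  linarith

lemma sum_log_sub_le_sum_log_sub_sum_div {ι : Type*} (s : Finset ι) (p d : ι → ℝ) {M : ℝ}
    (hM : ∀ k ∈ s, p k ≤ M) (hd0 : ∀ k ∈ s, 0 ≤ d k) (hdp : ∀ k ∈ s, d k < p k) :
    ∑ k ∈ s, log (p k - d k) ≤ ∑ k ∈ s, log (p k) - (∑ k ∈ s, d k) / M := by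
  rw [sum_div, ← sum_sub_distrib]
  refine sum_le_sum fun k hk => ?_
  have hd := hd0 k hk
  have hp : 0 < p k := hd.trans_lt (hdp k hk)
  have htangent := log_le_log_add_sub_div hp (sub_pos.2 (hdp k hk))
  have hdiv : d k / M ≤ d k / p k := div_le_div_of_nonneg_left hd hp (hM k hk)
  rw [sub_sub_cancel_left, neg_div] at htangent
  linarith

end Real

theorem log_sum_key_inequality_general {K : ℕ} (p : Fin K → ℝ)
    (hp : ∀ k, 0 < p k ∧ p k < 1)
    (y j : Fin K) (hjy : j ≠ y) (hmax : ∀ k, p k ≤ p y)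
    (D : ℝ) (hD : 0 < D)
    (d : Fin K → ℝ)
    (hd0 : ∀ k ∈ Finset.univ \ {j, y}, 0 ≤ d k)
    (hdk : ∀ k ∈ Finset.univ \ {j, y}, d k < p k)
    (hdsum : ∑ k ∈ Finset.univ \ {j, y}, d k = D) :
    Real.log (p y + D) + Real.log (p j) + ∑ k ∈ Finset.univ \ {j, y}, Real.log (p k - d k)
      < ∑ k, Real.log (p k) := by
  have hpy : 0 < p y := (hp y).1
  have hsplit : ∑ k, Real.log (p k)
      = ∑ k ∈ Finset.univ \ {j, y}, Real.log (p k) + (Real.log (p j) + Real.log (p y)) := by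
    rw [← sum_sdiff (subset_univ {j, y}), sum_pair hjy]
  have hgain := Real.log_lt_log_add_sub_div hpy (by positivity) (by linarith : p y + D ≠ p y)
  have hloss := Real.sum_log_sub_le_sum_log_sub_sum_div _ p d (fun k _ => hmax k) hd0 hdk
  rw [add_sub_cancel_left] at hgain
  rw [hdsum] at hloss
  linarith

theorem log_sum_key_inequality {K : ℕ} (hK : 3 ≤ K) (p : Fin K → ℝ)
    (hp : ∀ k, 0 < p k ∧ p k < 1) (hsum : ∑ k, p k = 1)
    (y j : Fin K) (hjy : j ≠ y) (hmax : ∀ k, p k ≤ p y)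
    (D : ℝ) (hD : 0 < D) (hD1 : D ≤ 1 - p y) (hD2 : p y + D ≤ 1)
    (d : Fin K → ℝ)
    (hd0 : ∀ k ∈ Finset.univ \ {j, y}, 0 ≤ d k)
    (hdk : ∀ k ∈ Finset.univ \ {j, y}, d k < p k)
    (hdsum : ∑ k ∈ Finset.univ \ {j, y}, d k = D) :
    Real.log (p y + D) + Real.log (p j) + ∑ k ∈ Finset.univ \ {j, y}, Real.log (p k - d k)
      < ∑ k, Real.log (p k) :=
  log_sum_key_inequality_general p hp y j hjy hmax D hD d hd0 hdk hdsum
end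

section
/- Let K ≥ 3 and let p¹, p² ∈ (0,1)^K be probability vectors with a label y and an index j ≠ y such that p¹_y = max_k p¹_k, p²_y = max_k p²_k, p¹_j = p²_j, p¹_y > p²_y, and p¹_k ≤ p²_k for all k ∉ {j, y}. Let A satisfy A + log p^i_k > 0 for all i, k. Then ∂NNCE/∂p_j evaluated at p¹ is strictly greater than at p²: (1/p¹_j)·(A + log p¹_y)/(Σ_k (A + log p¹_k))² > (1/p²_j)·(A + log p²_y)/(Σ_k (A + log p²_k))². -/
/-!
Moving mass from the top class `y` onto the other classes raises `∑ₖ log pₖ`: by concavity,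
`log p²ₖ - log p¹ₖ ≥ (p²ₖ - p¹ₖ) / p²ₖ ≥ (p²ₖ - p¹ₖ) / p²_y` for every `k`, strictly at `k = y`,
and the right-hand sides sum to `0`. So the NNCE denominator is smaller at `p¹`, while its
numerator `A + log p_y` is larger there and `p_j` is unchanged.
-/

open Finset

namespace Real

lemma sub_div_le_log_sub_log {a b : ℝ} (ha : 0 < a) (hb : 0 < b) :
    (b - a) / b ≤ log b - log a := by
  have h := log_le_sub_one_of_pos (div_pos ha hb)
  rw [log_div ha.ne' hb.ne'] at h
  rw [sub_div, div_self hb.ne']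
  linarith

lemma sub_div_lt_log_sub_log {a b : ℝ} (ha : 0 < a) (hb : 0 < b) (hab : a ≠ b) :
    (b - a) / b < log b - log a := by
  have h := log_lt_sub_one_of_pos (div_pos ha hb) (div_ne_one_of_ne hab)
  rw [log_div ha.ne' hb.ne'] at h
  rw [sub_div, div_self hb.ne']
  linarith

lemma sum_log_lt_sum_log_of_shift_from_max {ι : Type*} [Fintype ι] {p q : ι → ℝ}
    (hp : ∀ k, 0 < p k) (hq : ∀ k, 0 < q k) (hsum : ∑ k, p k = ∑ k, q k) {y : ι}
    (hqmax : ∀ k, q k ≤ q y) (hy : q y < p y) (hle : ∀ k, k ≠ y → p k ≤ q k) :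
    ∑ k, log (p k) < ∑ k, log (q k) := by
  have hterm : ∀ k, (q k - p k) / q y ≤ log (q k) - log (p k) := by
    intro k
    rcases eq_or_ne k y with rfl | hky
    · exact sub_div_le_log_sub_log (hp k) (hq k)
    · calc (q k - p k) / q y ≤ (q k - p k) / q k :=
            div_le_div_of_nonneg_left (sub_nonneg.2 (hle k hky)) (hq k) (hqmax k)
        _ ≤ log (q k) - log (p k) := sub_div_le_log_sub_log (hp k) (hq k)
  have hterm_y : (q y - p y) / q y < log (q y) - log (p y) :=
    sub_div_lt_log_sub_log (hp y) (hq y) hy.ne'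
  have hmass : ∑ k, (q k - p k) / q y = 0 := by
    rw [← sum_div, sum_sub_distrib, hsum, sub_self, zero_div]
  have hpos : 0 < ∑ k, (log (q k) - log (p k)) :=
    hmass ▸ sum_lt_sum (fun k _ => hterm k) ⟨y, mem_univ y, hterm_y⟩
  rw [sum_sub_distrib] at hpos
  linarith

end Real

lemma div_sq_lt_div_sq {a b s t : ℝ} (ha : 0 < a) (hba : b < a) (hs : 0 < s) (hst : s < t) :
    b / t ^ 2 < a / s ^ 2 :=
  calc b / t ^ 2 < a / t ^ 2 := by have ht := hs.trans hst; gcongr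
    _ < a / s ^ 2 := by gcongr

theorem nnce_gradient_sample_compare_general {K : ℕ} (p1 p2 : Fin K → ℝ)
    (hp1 : ∀ k, 0 < p1 k ∧ p1 k < 1) (hp2 : ∀ k, 0 < p2 k ∧ p2 k < 1)
    (hs1 : ∑ k, p1 k = 1) (hs2 : ∑ k, p2 k = 1)
    (y j : Fin K)
    (hmax2 : ∀ k, p2 k ≤ p2 y)
    (hj : p1 j = p2 j) (hy : p2 y < p1 y)
    (hk : ∀ k, k ≠ j → k ≠ y → p1 k ≤ p2 k)
    (A : ℝ) (hA1 : ∀ k, 0 < A + Real.log (p1 k)) :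
    (1 / p2 j) * (A + Real.log (p2 y)) / (∑ k : Fin K, (A + Real.log (p2 k))) ^ 2
      < (1 / p1 j) * (A + Real.log (p1 y)) / (∑ k : Fin K, (A + Real.log (p1 k))) ^ 2 := by
  have hle : ∀ k, k ≠ y → p1 k ≤ p2 k := fun k hky => by
    rcases eq_or_ne k j with rfl | hkj
    exacts [hj.le, hk k hkj hky]
  have hlog := Real.sum_log_lt_sum_log_of_shift_from_max (fun k => (hp1 k).1) (fun k => (hp2 k).1)
    (hs1.trans hs2.symm) hmax2 hy hle
  have hden : ∑ k, (A + Real.log (p1 k)) < ∑ k, (A + Real.log (p2 k)) := by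
    simp only [sum_add_distrib]
    linarith
  have hden_pos : 0 < ∑ k, (A + Real.log (p1 k)) := sum_pos (fun k _ => hA1 k) ⟨y, mem_univ y⟩
  have hnum : A + Real.log (p2 y) < A + Real.log (p1 y) := by
    gcongr
    exact (hp2 y).1
  rw [hj, mul_div_assoc, mul_div_assoc]
  exact mul_lt_mul_of_pos_left (div_sq_lt_div_sq (hA1 y) hnum hden_pos hden)
    (one_div_pos.2 (hj ▸ (hp1 j).1))

theorem nnce_gradient_sample_compare {K : ℕ} (hK : 3 ≤ K) (p1 p2 : Fin K → ℝ)
    (hp1 : ∀ k, 0 < p1 k ∧ p1 k < 1) (hp2 : ∀ k, 0 < p2 k ∧ p2 k < 1)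
    (hs1 : ∑ k, p1 k = 1) (hs2 : ∑ k, p2 k = 1)
    (y j : Fin K) (hjy : j ≠ y)
    (hmax1 : ∀ k, p1 k ≤ p1 y) (hmax2 : ∀ k, p2 k ≤ p2 y)
    (hj : p1 j = p2 j) (hy : p2 y < p1 y)
    (hk : ∀ k, k ≠ j → k ≠ y → p1 k ≤ p2 k)
    (A : ℝ) (hA1 : ∀ k, 0 < A + Real.log (p1 k)) (hA2 : ∀ k, 0 < A + Real.log (p2 k)) :
    (1 / p2 j) * (A + Real.log (p2 y)) / (∑ k : Fin K, (A + Real.log (p2 k))) ^ 2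
      < (1 / p1 j) * (A + Real.log (p1 y)) / (∑ k : Fin K, (A + Real.log (p1 k))) ^ 2 :=
  nnce_gradient_sample_compare_general p1 p2 hp1 hp2 hs1 hs2 y j hmax2 hj hy hk A hA1
end
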